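/- With λ2 = 2u1+6u2 and λ3 = 2(u1+u2+2u4) - 8(u1-u4)(u2-u4)/(u1+u2-2u4), and q = (3/8)σ1² - (1/2)σ2 evaluated at (u1,u2,u4,u4), one has (1/2)[λ2 - 2(u1+u2+2u4)]∂q/∂u2 - (1/2)[λ3 - 2(u1+u2+2u4)]∂q/∂u3 = ((u2-u4)/(2(u1+u2-2u4))) V(u1,u2,u4), where V(u1,u2,u4) = 3u1² + 3u2² - 12u4² + 6u1u2 + 6u1u4 - 6u2u4. -/

import Mathlib

/-- q(u1,u2,u3,u4) = (3/8)σ1² - (1/2)σ2. -/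
noncomputable def qfun (u1 u2 u3 u4 : ℝ) : ℝ :=
  3/8 * (u1 + u2 + u3 + u4)^2
    - 1/2 * (u1*u2 + u1*u3 + u1*u4 + u2*u3 + u2*u4 + u3*u4)

def Vquad (u1 u2 u4 : ℝ) : ℝ :=
  3*u1^2 + 3*u2^2 - 12*u4^2 + 6*u1*u2 + 6*u1*u4 - 6*u2*u4

lemma deriv_q2 (u1 u2 u4 : ℝ) :
    deriv (fun y => qfun u1 y u4 u4) u2
      = 3/4 * (u1 + u2 + u4 + u4) - 1/2 * (u1 + u4 + u4) := by
  have h : HasDerivAt (fun y => qfun u1 y u4 u4)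
      (3/4 * (u1 + u2 + u4 + u4) - 1/2 * (u1 + u4 + u4)) u2 := by
    unfold qfun
    have h1 : HasDerivAt (fun y : ℝ => u1 + y + u4 + u4) 1 u2 := by
      simpa using (((hasDerivAt_id u2).const_add u1).add_const u4).add_const u4
    have h2 := ((h1.pow 2).const_mul (3/8 : ℝ))
    have h3 : HasDerivAt (fun y : ℝ =>
        u1*y + u1*u4 + u1*u4 + y*u4 + y*u4 + u4*u4)
        (u1 + u4 + u4) u2 := by
      have := (((((hasDerivAt_id u2).const_mul u1).add_const (u1*u4)).add_const
        (u1*u4)).add ((hasDerivAt_id u2).mul_const u4)).add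
        ((hasDerivAt_id u2).mul_const u4)
      simpa [mul_comm] using this.add_const (u4*u4)
    have := h2.sub (h3.const_mul (1/2 : ℝ))
    refine this.congr_deriv ?_
    ring
  simpa using h.deriv
lemma deriv_q3 (u1 u2 u4 : ℝ) :
    deriv (fun y => qfun u1 u2 y u4) u4
      = 3/4 * (u1 + u2 + u4 + u4) - 1/2 * (u1 + u2 + u4) := by
  have h : HasDerivAt (fun y => qfun u1 u2 y u4)
      (3/4 * (u1 + u2 + u4 + u4) - 1/2 * (u1 + u2 + u4)) u4 := by
    unfold qfun
    have h1 : HasDerivAt (fun y : ℝ => u1 + u2 + y + u4) 1 u4 := by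
      simpa using (((hasDerivAt_id u4).const_add (u1 + u2)).add_const u4)
    have h2 := ((h1.pow 2).const_mul (3/8 : ℝ))
    have h3 : HasDerivAt (fun y : ℝ =>
        u1*u2 + u1*y + u1*u4 + u2*y + u2*u4 + y*u4)
        (u1 + u2 + u4) u4 := by
      have := (((((hasDerivAt_const u4 (u1*u2)).add
        ((hasDerivAt_id u4).const_mul u1)).add_const (u1*u4)).add
        ((hasDerivAt_id u4).const_mul u2)).add_const (u2*u4)).add
        ((hasDerivAt_id u4).mul_const u4)
      exact this.congr_deriv (by ring)
    have := h2.sub (h3.const_mul (1/2 : ℝ))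
    refine this.congr_deriv ?_
    ring
  simpa using h.deriv

/-- The identity (μ2 - μ3)|_{u3=u4} = ((u2-u4)/(2(u1+u2-2u4))) V(u1,u2,u4). -/
theorem mu2_sub_mu3_at_confluence (u1 u2 u4 : ℝ) (hne : u1 + u2 - 2*u4 ≠ 0) :
    (1/2) * ((2*u1 + 6*u2) - 2*(u1 + u2 + 2*u4))
        * deriv (fun y => qfun u1 y u4 u4) u2
      - (1/2) * ((2*(u1 + u2 + 2*u4) - 8*(u1 - u4)*(u2 - u4)/(u1 + u2 - 2*u4))
            - 2*(u1 + u2 + 2*u4))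
        * deriv (fun y => qfun u1 u2 y u4) u4
      = ((u2 - u4) / (2*(u1 + u2 - 2*u4))) * Vquad u1 u2 u4 := by
  rw [deriv_q2, deriv_q3, Vquad]
  field_simp
  ring
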